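/- arXiv:2304.07716 — 6 statements merged into one kernel-verified Lean document; each statement's English description precedes it below -/
import Mathlib

section
/- The polytope Q̄₁ is an extended formulation of the assignment polytope 𝒜ₙ; that is, the projection of Q̄₁ onto the w-variables equals 𝒜ₙ: π_w(Q̄₁) := { w ∈ ℝ^{m×m} : ∃ y, (w,y) ∈ Q̄₁ } = 𝒜ₙ. -/
/-- The assignment (Birkhoff) polytope `𝒜ₙ` (with `m = n - 1`): the set of
`m × m` doubly stochastic matrices.  Index `i : Fin m` stands for city `i+1`
(a city in `{1,…,m}`), index `r : Fin m` for stage/position `r+1`. -/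
def assignmentPolytope (m : ℕ) : Set (Fin m → Fin m → ℝ) :=
  {w | (∀ i, ∑ r, w i r = 1) ∧ (∀ r, ∑ i, w i r = 1) ∧ ∀ i r, 0 ≤ w i r}

/-- The polytope `Q̄₁`.  Cities are `Fin (m+1)` (city `0` is the depot, and
`i.succ : Fin (m+1)` is city `i+1` for `i : Fin m`).  The `y`-variables are
indexed by ordered pairs of distinct cities; the (nonexistent) diagonal
entries are pinned to `0`. -/
def Qbar1 (m : ℕ) :
    Set ((Fin m → Fin m → ℝ) × (Fin (m + 1) → Fin (m + 1) → ℝ)) :=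
  {p |
    p.1 ∈ assignmentPolytope m ∧
    (∀ i, p.2 i i = 0) ∧
    (∀ i r : Fin m, r.val = 0 → p.2 0 i.succ = p.1 i r) ∧
    (∀ i r : Fin m, r.val = m - 1 → p.2 i.succ 0 = p.1 i r) ∧
    (∀ i j r r' : Fin m, i ≠ j → r'.val = r.val + 1 →
      p.1 i r + p.1 j r' - p.2 i.succ j.succ ≤ 1) ∧
    (∑ i : Fin m, ∑ j : Fin m, if i = j then 0 else p.2 i.succ j.succ) = (m : ℝ) - 1 ∧
    (∀ i j, 0 ≤ p.2 i j)}

/-- The permutation matrix `ŵ` of a permutation `u` of `{1,…,m}`: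
`ŵ_{ir} = 1` iff city `i+1` is visited at stage `r+1`, i.e. iff `i = u r`. -/
def permMatrix (m : ℕ) (u : Equiv.Perm (Fin m)) : Fin m → Fin m → ℝ :=
  fun i r => if i = u r then 1 else 0

/-- The tour incidence vector `ȳ^u` of a permutation `u` of `{1,…,m}`:
`ȳ^u_{0,u(1)} = 1`, `ȳ^u_{u(m),0} = 1`, `ȳ^u_{u(q),u(q+1)} = 1` for
`q = 1,…,m−1`, and all other entries are `0`. -/
def tourVec (m : ℕ) (u : Equiv.Perm (Fin m)) : Fin (m + 1) → Fin (m + 1) → ℝ :=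
  fun a b =>
    if (∃ r : Fin m, r.val = 0 ∧ a = 0 ∧ b = (u r).succ) ∨
        (∃ r : Fin m, r.val = m - 1 ∧ a = (u r).succ ∧ b = 0) ∨
        (∃ q q' : Fin m, q'.val = q.val + 1 ∧ a = (u q).succ ∧ b = (u q').succ)
    then 1 else 0

/-- "The TSP polytope" `𝒫ₙ` (with `m = n - 1`): the convex hull of the tour
incidence vectors. -/
def tspPolytope (m : ℕ) : Set (Fin (m + 1) → Fin (m + 1) → ℝ) :=
  convexHull ℝ {y | ∃ u : Equiv.Perm (Fin m), y = tourVec m u}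

/-- The cost `d(0,u(1)) + Σ_{q=1}^{m−1} d(u(q),u(q+1)) + d(u(m),0)` of the TSP
tour `0 → u(1) → … → u(m) → 0` associated with a permutation `u` of `{1,…,m}`. -/
def tourCost (m : ℕ) (d : Fin (m + 1) → Fin (m + 1) → ℝ) (u : Equiv.Perm (Fin m)) : ℝ :=
  (∑ r : Fin m, if r.val = 0 then d 0 ((u r).succ) else 0) +
  (∑ q : Fin m, ∑ q' : Fin m, if q'.val = q.val + 1 then d ((u q).succ) ((u q').succ) else 0) +
  (∑ r : Fin m, if r.val = m - 1 then d ((u r).succ) 0 else 0)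

/-!
Given `w ∈ 𝒜ₙ`, let `y_{ij} = Σ_r w_{ir} w_{j,r+1}`, the expected number of steps `i → j` when
every stage `r` independently draws its city from the column `w_{·r}`. Since
`(1 - w_{ir}) (1 - w_{j,r+1}) ≥ 0`, we get `w_{ir} + w_{j,r+1} - 1 ≤ w_{ir} w_{j,r+1} ≤ y_{ij}`,
and as the columns of `w` sum to `1`, the `y_{ij}` over all `i, j` (diagonal included) add up
to the number `m - 1` of consecutive pairs of stages. `Q̄₁` has no diagonal variables, so each
`y_{ii}` is moved onto an off-diagonal entry of row `i`; the depot arcs are `y_{0i} = w_{i1}`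
and `y_{i0} = w_{im}`.
-/

open Finset

lemma sum_sum_ite_val_eq_add_one {m : ℕ} (hm : 1 ≤ m) :
    ∑ r : Fin m, ∑ r' : Fin m, (if r'.val = r.val + 1 then (1 : ℝ) else 0) = m - 1 := by
  have row (r : Fin m) :
      ∑ r' : Fin m, (if r'.val = r.val + 1 then (1 : ℝ) else 0) =
        if r.val + 1 < m then 1 else 0 := by
    split_ifs with h
    · rw [sum_eq_single_of_mem ⟨r.val + 1, h⟩ (mem_univ _)
        fun r' _ hr' => if_neg fun e => hr' (Fin.ext e)]
      simp
    · exact sum_eq_zero fun r' _ => if_neg fun e => h (by have := r'.isLt; omega)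
  have : (range m).filter (· + 1 < m) = range (m - 1) := by ext; simp; omega
  simp only [row, Fin.sum_univ_eq_sum_range (fun k => if k + 1 < m then (1 : ℝ) else 0),
    ← sum_filter, this]
  simp [Nat.cast_sub hm]

section ConsecutiveMass

variable {ι : Type*} {m : ℕ} {w : ι → Fin m → ℝ}

def consecutiveMass (w : ι → Fin m → ℝ) (i j : ι) : ℝ :=
  ∑ r : Fin m, ∑ r' : Fin m, if r'.val = r.val + 1 then w i r * w j r' else 0

lemma consecutiveMass_nonneg (hw : ∀ i r, 0 ≤ w i r) (i j : ι) : 0 ≤ consecutiveMass w i j :=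
  sum_nonneg fun r _ => sum_nonneg fun r' _ => ite_nonneg (mul_nonneg (hw i r) (hw j r')) le_rfl

lemma mul_le_consecutiveMass (hw : ∀ i r, 0 ≤ w i r) (i j : ι) {r r' : Fin m}
    (hr : r'.val = r.val + 1) : w i r * w j r' ≤ consecutiveMass w i j := by
  have hterm (s s' : Fin m) : 0 ≤ if s'.val = s.val + 1 then w i s * w j s' else 0 :=
    ite_nonneg (mul_nonneg (hw i s) (hw j s')) le_rfl
  calc w i r * w j r' = if r'.val = r.val + 1 then w i r * w j r' else 0 := (if_pos hr).symm
    _ ≤ ∑ s' : Fin m, if s'.val = r.val + 1 then w i r * w j s' else 0 :=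
      single_le_sum (fun s' _ => hterm r s') (mem_univ r')
    _ ≤ consecutiveMass w i j :=
      single_le_sum (fun s _ => sum_nonneg fun s' _ => hterm s s') (mem_univ r)

lemma sum_sum_consecutiveMass [Fintype ι] (hcol : ∀ r, ∑ i, w i r = 1) (hm : 1 ≤ m) :
    ∑ i, ∑ j, consecutiveMass w i j = m - 1 := by
  calc ∑ i, ∑ j, consecutiveMass w i j
      = ∑ r : Fin m, ∑ r' : Fin m,
          if r'.val = r.val + 1 then (∑ i, w i r) * ∑ j, w j r' else 0 := by
        unfold consecutiveMass
        simp_rw [sum_comm (s := (univ : Finset ι)) (t := (univ : Finset (Fin m)))]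
        refine sum_congr rfl fun r _ => sum_congr rfl fun r' _ => ?_
        split_ifs <;> simp [sum_mul_sum]
    _ = m - 1 := by simp only [hcol, mul_one, sum_sum_ite_val_eq_add_one hm]

end ConsecutiveMass

section DivertDiagonal

variable {ι : Type*} [DecidableEq ι]

def divertDiagonal (B : ι → ι → ℝ) (σ : ι → ι) (i j : ι) : ℝ :=
  B i j + if j = σ i then B i i else 0

lemma le_divertDiagonal {B : ι → ι → ℝ} (hB : ∀ i j, 0 ≤ B i j) (σ : ι → ι) (i j : ι) :
    B i j ≤ divertDiagonal B σ i j :=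
  le_add_of_nonneg_right (ite_nonneg (hB i i) le_rfl)

lemma sum_ite_eq_zero_divertDiagonal [Fintype ι] (B : ι → ι → ℝ) {σ : ι → ι}
    (hσ : ∀ i, σ i ≠ i) (i : ι) :
    ∑ j, (if i = j then 0 else divertDiagonal B σ i j) = ∑ j, B i j := by
  have hoff (f : ι → ℝ) : ∑ j, (if i = j then 0 else f j) = ∑ j, f j - f i := by
    simp [sum_ite, filter_ne]
  simp [hoff, divertDiagonal, sum_add_distrib, (hσ i).symm]

end DivertDiagonal

lemma le_one_of_mem_assignmentPolytope {m : ℕ} {w : Fin m → Fin m → ℝ}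
    (hw : w ∈ assignmentPolytope m) (i r : Fin m) : w i r ≤ 1 :=
  hw.1 i ▸ single_le_sum (fun s _ => hw.2.2 i s) (mem_univ r)

def depotExtension {m : ℕ} (hm : 0 < m) (w z : Fin m → Fin m → ℝ) :
    Fin (m + 1) → Fin (m + 1) → ℝ :=
  Fin.cases (Fin.cases 0 fun j => w j ⟨0, hm⟩)
    fun i => Fin.cases (w i ⟨m - 1, by omega⟩) fun j => if i = j then 0 else z i j

lemma depotExtension_mem_Qbar1 {m : ℕ} (hm : 0 < m) {w z : Fin m → Fin m → ℝ}
    (hw : w ∈ assignmentPolytope m) (hz : ∀ i j, 0 ≤ z i j)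
    (hconsec : ∀ i j r r' : Fin m, i ≠ j → r'.val = r.val + 1 → w i r + w j r' - z i j ≤ 1)
    (hsum : ∑ i, ∑ j, (if i = j then 0 else z i j) = (m : ℝ) - 1) :
    (w, depotExtension hm w z) ∈ Qbar1 m := by
  refine ⟨hw, fun a => ?_, fun i r hr => ?_, fun i r hr => ?_, fun i j r r' hij hr => ?_, ?_,
    fun a b => ?_⟩
  · cases a using Fin.cases <;> simp [depotExtension]
  · rw [show r = ⟨0, hm⟩ from Fin.ext hr]
    simp [depotExtension]
  · rw [show r = ⟨m - 1, by omega⟩ from Fin.ext hr]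
    simp [depotExtension]
  · simpa [depotExtension, hij] using hconsec i j r r' hij hr
  · simpa +contextual [depotExtension] using hsum
  · cases a using Fin.cases <;> cases b using Fin.cases <;> simp [depotExtension, hw.2.2]
    exact ite_nonneg le_rfl (hz _ _)

lemma exists_mem_Qbar1 {m : ℕ} (hm : 2 ≤ m) {w : Fin m → Fin m → ℝ}
    (hw : w ∈ assignmentPolytope m) : ∃ y, (w, y) ∈ Qbar1 m := by
  obtain ⟨-, hcol, hpos⟩ := id hw
  have : Nontrivial (Fin m) := Fin.nontrivial_iff_two_le.mpr hm
  choose σ hσ using fun i : Fin m => exists_ne i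
  have hB := consecutiveMass_nonneg hpos
  have hz := le_divertDiagonal hB σ
  refine ⟨_, depotExtension_mem_Qbar1 (by omega) (z := divertDiagonal (consecutiveMass w) σ) hw
    (fun i j => (hB i j).trans (hz i j)) (fun i j r r' _ hr => ?_) ?_⟩
  · have hprod := mul_nonneg (sub_nonneg.2 (le_one_of_mem_assignmentPolytope hw i r))
      (sub_nonneg.2 (le_one_of_mem_assignmentPolytope hw j r'))
    linarith [mul_le_consecutiveMass hpos i j hr, hz i j]
  · simp only [sum_ite_eq_zero_divertDiagonal _ hσ, sum_sum_consecutiveMass hcol (by omega)]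

/-- The polytope `Q̄₁` is an extended formulation of the
assignment polytope `𝒜ₙ`: the projection of `Q̄₁` onto the `w`-variables
equals `𝒜ₙ`. -/
theorem Qbar1_isEF_of_assignmentPolytope (n : ℕ) (hn : 3 ≤ n) :
    {w : Fin (n - 1) → Fin (n - 1) → ℝ |
        ∃ y : Fin (n - 1 + 1) → Fin (n - 1 + 1) → ℝ, (w, y) ∈ Qbar1 (n - 1)} =
      assignmentPolytope (n - 1) :=
  Set.ext fun _ => ⟨fun ⟨_, hy⟩ => hy.1, exists_mem_Qbar1 (by omega)⟩
end

section
/- The set { y with all entries in {0,1} : there exists w with all entries in {0,1} such that (w,y) ∈ Q̄₁ } equals the set { ȳ^u : u a permutation of {1,…,m} } of tour incidence vectors; consequently, the TSP polytope 𝒫ₙ equals the convex hull of { y ∈ {0,1}-vectors : ∃ w ∈ {0,1}-matrices with (w,y) ∈ Q̄₁ }. -/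
/-! A 0/1 point of the assignment polytope is a permutation matrix `ŵ^u`. For `(ŵ^u, y) ∈ Q̄₁`
the depot equations copy the first and last columns of `ŵ^u` into the arcs at city `0`, and
the linking inequalities `ŵ_{ir} + ŵ_{j,r+1} - y_{ij} ≤ 1` force `y ≥ 1` on the `m - 1` inner
arcs of the tour `u`. Since the nonnegative inner entries of `y` sum to exactly `m - 1`, every
other inner entry vanishes, so `y = ȳ^u`. Conversely `(ŵ^u, ȳ^u) ∈ Q̄₁` by inspection. -/

open Finset

lemma existsUnique_eq_one_of_sum_eq_one {ι R : Type*} [Fintype ι] [AddCommMonoidWithOne R]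
    [CharZero R] {f : ι → R} (h01 : ∀ i, f i = 0 ∨ f i = 1) (hsum : ∑ i, f i = 1) :
    ∃! i, f i = 1 := by
  classical
  have hcount : ∑ i, f i = #{i | f i = 1} := by
    rw [← sum_boole]
    refine sum_congr rfl fun i _ => ?_
    rcases h01 i with h | h <;> simp [h]
  rw [Fintype.existsUnique_iff_card_one]
  exact_mod_cast hcount ▸ hsum

lemma eq_of_le_of_sum_sum_eq {ι κ M : Type*} [Fintype ι] [Fintype κ] [AddCommMonoid M]
    [PartialOrder M] [IsOrderedCancelAddMonoid M] {f g : ι → κ → M}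
    (hle : ∀ i j, f i j ≤ g i j) (hsum : ∑ i, ∑ j, f i j = ∑ i, ∑ j, g i j) :
    f = g := by
  simp only [← Fintype.sum_prod_type'] at hsum
  have hpairs := (sum_eq_sum_iff_of_le fun p _ => hle p.1 p.2).1 hsum
  exact funext₂ fun i j => hpairs (i, j) (mem_univ _)

section

variable {m : ℕ} (u : Equiv.Perm (Fin m))

lemma sum_sum_ite_val_eq_val_add_one (hm : 1 ≤ m) :
    ∑ q : Fin m, ∑ q' : Fin m, (if q'.val = q.val + 1 then (1 : ℝ) else 0) = m - 1 := by
  obtain ⟨k, rfl⟩ : ∃ k, m = k + 1 := ⟨m - 1, by omega⟩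
  have hcastSucc : ∀ q : Fin k,
      ∑ q' : Fin (k + 1), (if q'.val = q.castSucc.val + 1 then (1 : ℝ) else 0) = 1 := by
    intro q
    simp [← Fin.val_succ, Fin.val_inj]
  have hlast : ∑ q' : Fin (k + 1), (if q'.val = (Fin.last k).val + 1 then (1 : ℝ) else 0) = 0 :=
    sum_eq_zero fun q' _ => if_neg (by simp only [Fin.val_last]; omega)
  rw [Fin.sum_univ_castSucc, hlast, sum_congr rfl fun q _ => hcastSucc q]
  simp

lemma permMatrix_apply_eq_ite_symm (i r : Fin m) :
    permMatrix m u i r = if u.symm i = r then 1 else 0 := by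
  simp only [permMatrix, Equiv.symm_apply_eq]

lemma permMatrix_eq_zero_or_one (i r : Fin m) :
    permMatrix m u i r = 0 ∨ permMatrix m u i r = 1 := by
  unfold permMatrix
  split_ifs <;> simp

lemma permMatrix_mem_assignmentPolytope : permMatrix m u ∈ assignmentPolytope m := by
  refine ⟨fun i => ?_, fun r => ?_, fun i r => ?_⟩
  · simp [permMatrix_apply_eq_ite_symm]
  · simp [permMatrix]
  · unfold permMatrix; split_ifs <;> norm_num

lemma exists_eq_permMatrix_of_mem_assignmentPolytope {w : Fin m → Fin m → ℝ}
    (hw : w ∈ assignmentPolytope m) (h01 : ∀ i r, w i r = 0 ∨ w i r = 1) :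
    ∃ u, w = permMatrix m u := by
  obtain ⟨hrow, hcol, -⟩ := hw
  -- `v r` is the row of the unique 1 in column `r`, `s i` the column of the unique 1 in row `i`.
  choose v hv hv_unique using fun r =>
    existsUnique_eq_one_of_sum_eq_one (fun i => h01 i r) (hcol r)
  choose s hs hs_unique using fun i => existsUnique_eq_one_of_sum_eq_one (h01 i) (hrow i)
  let u : Equiv.Perm (Fin m) :=
    ⟨v, s, fun r => (hs_unique _ r (hv r)).symm, fun i => (hv_unique _ i (hs i)).symm⟩
  refine ⟨u, funext₂ fun i r => ?_⟩
  rcases h01 i r with h | h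
  · rw [permMatrix, if_neg]
    · exact h
    · rintro rfl
      simp [u, hv] at h
  · rw [permMatrix, h]
    exact (if_pos (hv_unique r i h)).symm

lemma tourVec_zero_succ (i r : Fin m) (hr : r.val = 0) :
    tourVec m u 0 i.succ = permMatrix m u i r := by
  simp [tourVec, permMatrix, ← Equiv.symm_apply_eq, ← hr, ← Fin.ext_iff,
    eq_comm (a := (0 : Fin (m + 1)))]

lemma tourVec_succ_zero (i r : Fin m) (hr : r.val = m - 1) :
    tourVec m u i.succ 0 = permMatrix m u i r := by
  simp [tourVec, permMatrix, ← Equiv.symm_apply_eq, ← hr, ← Fin.ext_iff,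
    eq_comm (a := (0 : Fin (m + 1)))]

lemma tourVec_succ_succ (i j : Fin m) :
    tourVec m u i.succ j.succ = if (u.symm j).val = (u.symm i).val + 1 then 1 else 0 := by
  simp [tourVec, ← Equiv.symm_apply_eq]

lemma tourVec_self (a : Fin (m + 1)) : tourVec m u a a = 0 := by
  cases a using Fin.cases with
  | zero => simp [tourVec, eq_comm (a := (0 : Fin (m + 1)))]
  | succ i => simp [tourVec_succ_succ]

lemma tourVec_eq_zero_or_one (a b : Fin (m + 1)) :
    tourVec m u a b = 0 ∨ tourVec m u a b = 1 := by
  unfold tourVec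
  split_ifs <;> simp

lemma sum_offDiag_tourVec (hm : 1 ≤ m) :
    ∑ i : Fin m, ∑ j : Fin m, (if i = j then 0 else tourVec m u i.succ j.succ) = m - 1 := by
  have hentry : ∀ i j : Fin m, (if i = j then 0 else tourVec m u i.succ j.succ) =
      if (u.symm j).val = (u.symm i).val + 1 then 1 else 0 := by
    intro i j
    rcases eq_or_ne i j with rfl | hij
    · simp
    · rw [if_neg hij, tourVec_succ_succ]
  simp only [hentry]
  rw [← sum_sum_ite_val_eq_val_add_one hm, ← Equiv.sum_comp u]
  refine sum_congr rfl fun q _ => ?_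
  rw [← Equiv.sum_comp u]
  simp

lemma permMatrix_tourVec_mem_Qbar1 (hm : 1 ≤ m) :
    (permMatrix m u, tourVec m u) ∈ Qbar1 m := by
  refine ⟨permMatrix_mem_assignmentPolytope u, tourVec_self u,
    fun i r hr => tourVec_zero_succ u i r hr, fun i r hr => tourVec_succ_zero u i r hr,
    fun i j r r' _ hr' => ?_, sum_offDiag_tourVec u hm,
    fun a b => ?_⟩
  · dsimp only
    rw [permMatrix_apply_eq_ite_symm, permMatrix_apply_eq_ite_symm, tourVec_succ_succ]
    split_ifs <;> simp_all
  · rcases tourVec_eq_zero_or_one u a b with h | h <;> simp [h]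

lemma eq_tourVec_of_mem_Qbar1 (hm : 1 ≤ m) {u : Equiv.Perm (Fin m)}
    {y : Fin (m + 1) → Fin (m + 1) → ℝ} (hQ : (permMatrix m u, y) ∈ Qbar1 m) :
    y = tourVec m u := by
  obtain ⟨-, hdiag, hfirst, hlast, harc, hsum, hnonneg⟩ := hQ
  dsimp only at hdiag hfirst hlast harc hsum hnonneg
  have hoff : (fun i j : Fin m => if i = j then 0 else tourVec m u i.succ j.succ) =
      fun i j => if i = j then 0 else y i.succ j.succ := by
    refine eq_of_le_of_sum_sum_eq (fun i j => ?_) ((sum_offDiag_tourVec u hm).trans hsum.symm)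
    rcases eq_or_ne i j with rfl | hij
    · simp
    rw [if_neg hij, if_neg hij, tourVec_succ_succ]
    split_ifs with hsucc
    · have hlink := harc i j (u.symm i) (u.symm j) hij hsucc
      simp only [permMatrix_apply_eq_ite_symm, if_true] at hlink
      linarith
    · exact hnonneg _ _
  funext a b
  cases a using Fin.cases with
  | zero =>
    cases b using Fin.cases with
    | zero => rw [hdiag, tourVec_self]
    | succ j => rw [hfirst j ⟨0, by omega⟩ rfl, tourVec_zero_succ u j ⟨0, by omega⟩ rfl]
  | succ i =>
    cases b using Fin.cases with
    | zero =>
      rw [hlast i ⟨m - 1, by omega⟩ rfl, tourVec_succ_zero u i ⟨m - 1, by omega⟩ rfl]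
    | succ j =>
      rcases eq_or_ne i j with rfl | hij
      · rw [hdiag, tourVec_self]
      · simpa [hij] using (congrFun₂ hoff i j).symm

lemma zero_one_points_Qbar1_eq_tours (hm : 1 ≤ m) :
    {y : Fin (m + 1) → Fin (m + 1) → ℝ | (∀ i j, y i j = 0 ∨ y i j = 1) ∧
        ∃ w : Fin m → Fin m → ℝ, (∀ i r, w i r = 0 ∨ w i r = 1) ∧
          (w, y) ∈ Qbar1 m} =
      {y | ∃ u : Equiv.Perm (Fin m), y = tourVec m u} := by
  ext y
  constructor
  · rintro ⟨-, w, hw01, hQ⟩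
    obtain ⟨u, rfl⟩ := exists_eq_permMatrix_of_mem_assignmentPolytope hQ.1 hw01
    exact ⟨u, eq_tourVec_of_mem_Qbar1 hm hQ⟩
  · rintro ⟨u, rfl⟩
    exact ⟨tourVec_eq_zero_or_one u, permMatrix m u, permMatrix_eq_zero_or_one u,
      permMatrix_tourVec_mem_Qbar1 u hm⟩

end

/-- The set of 0/1 vectors `y` admitting a 0/1 matrix `w`
with `(w, y) ∈ Q̄₁` equals the set of tour incidence vectors `ȳ^u`;
consequently, the TSP polytope `𝒫ₙ` equals the convex hull of that set. -/
theorem integral_points_of_Qbar1_eq_tours (n : ℕ) (hn : 3 ≤ n) :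
    ({y : Fin (n - 1 + 1) → Fin (n - 1 + 1) → ℝ |
        (∀ i j, y i j = 0 ∨ y i j = 1) ∧
        ∃ w : Fin (n - 1) → Fin (n - 1) → ℝ,
          (∀ i r, w i r = 0 ∨ w i r = 1) ∧ (w, y) ∈ Qbar1 (n - 1)} =
      {y | ∃ u : Equiv.Perm (Fin (n - 1)), y = tourVec (n - 1) u}) ∧
    tspPolytope (n - 1) =
      convexHull ℝ
        {y : Fin (n - 1 + 1) → Fin (n - 1 + 1) → ℝ |
          (∀ i j, y i j = 0 ∨ y i j = 1) ∧
          ∃ w : Fin (n - 1) → Fin (n - 1) → ℝ,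
            (∀ i r, w i r = 0 ∨ w i r = 1) ∧ (w, y) ∈ Qbar1 (n - 1)} := by
  have htours := zero_one_points_Qbar1_eq_tours (m := n - 1) (by omega)
  exact ⟨htours, by rw [htours, tspPolytope]⟩
end

section
/- For n = 5, the polytope Q̄₁ is non-integral: Q̄₁ has an extreme point at least one of whose coordinates is not an integer. -/
theorem mem_extremePoints_of_forall_le_smul {E : Type*} [AddCommGroup E] [PartialOrder E]
    [IsOrderedAddMonoid E] [Module ℝ E] [PosSMulMono ℝ E] {S : Set E} {p : E} (hp : p ∈ S)
    (hnonneg : ∀ x ∈ S, 0 ≤ x) (huniq : ∀ x ∈ S, ∀ t : ℝ, x ≤ t • p → x = p) :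
    p ∈ Set.extremePoints ℝ S := by
  refine ⟨hp, ?_⟩
  rintro x hx y hy ⟨a, b, ha, hb, -, rfl⟩
  refine huniq x hx a⁻¹ ?_
  have hax : a • x ≤ a • x + b • y := le_add_of_nonneg_right (smul_nonneg hb.le (hnonneg y hy))
  calc x = a⁻¹ • a • x := (inv_smul_smul₀ ha.ne' x).symm
    _ ≤ a⁻¹ • (a • x + b • y) := smul_le_smul_of_nonneg_left hax (inv_nonneg.2 ha.le)

noncomputable def fracW : Fin 4 → Fin 4 → ℝ :=
  ![![1/2, 1/2, 0, 0], ![0, 1/2, 1/2, 0], ![1/2, 0, 0, 1/2], ![0, 0, 1/2, 1/2]]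

/-- `Q̄₁` bounds `y` only from below, so the whole mass `m - 1 = 3` of the arcs between cities
`1,…,4` can sit on the single arc `(2,3)`. -/
noncomputable def fracY : Fin 5 → Fin 5 → ℝ :=
  ![![0, 1/2, 0, 1/2, 0], 0, ![0, 0, 0, 3, 0], ![1/2, 0, 0, 0, 0], ![1/2, 0, 0, 0, 0]]

theorem fracW_mem_assignmentPolytope : fracW ∈ assignmentPolytope 4 := by
  refine ⟨?_, ?_, ?_⟩
  · intro i; fin_cases i <;> simp [fracW, Fin.sum_univ_four] <;> norm_num
  · intro r; fin_cases r <;> simp [fracW, Fin.sum_univ_four] <;> norm_num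
  · intro i r; fin_cases i <;> fin_cases r <;> simp [fracW]

theorem fracPoint_mem_Qbar1 : (fracW, fracY) ∈ Qbar1 4 := by
  refine ⟨fracW_mem_assignmentPolytope, ?_, ?_, ?_, ?_, ?_, ?_⟩
  · intro i; fin_cases i <;> simp [fracY]
  · intro i r hr
    obtain rfl : r = 0 := Fin.ext hr
    fin_cases i <;> simp [fracW, fracY]
  · intro i r hr
    obtain rfl : r = 3 := Fin.ext hr
    fin_cases i <;> simp [fracW, fracY]
  · intro i j r r' hij hr
    fin_cases r <;> fin_cases r' <;> simp at hr <;> fin_cases i <;> fin_cases j <;>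
      simp [fracW, fracY] at hij ⊢ <;> norm_num
  · simp [fracY, Fin.sum_univ_four]; norm_num
  · intro i j; fin_cases i <;> fin_cases j <;> simp [fracY]

theorem eq_fracW_of_support {w : Fin 4 → Fin 4 → ℝ} (hw : w ∈ assignmentPolytope 4)
    (hzero : ∀ i r, fracW i r = 0 → w i r = 0)
    (h₁ : w 0 0 + w 1 1 ≤ 1) (h₂ : w 2 0 + w 0 1 ≤ 1) : w = fracW := by
  obtain ⟨hrow, hcol, -⟩ := hw
  have r0 := hrow 0; have r1 := hrow 1; have r2 := hrow 2; have r3 := hrow 3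
  have c0 := hcol 0; have c1 := hcol 1; have c2 := hcol 2; have c3 := hcol 3
  simp only [Fin.sum_univ_four] at r0 r1 r2 r3 c0 c1 c2 c3
  have := hzero 0 2 (by simp [fracW]); have := hzero 0 3 (by simp [fracW])
  have := hzero 1 0 (by simp [fracW]); have := hzero 1 3 (by simp [fracW])
  have := hzero 2 1 (by simp [fracW]); have := hzero 2 2 (by simp [fracW])
  have := hzero 3 0 (by simp [fracW]); have := hzero 3 1 (by simp [fracW])
  funext i r
  fin_cases i <;> fin_cases r <;> simp [fracW] <;> linarith

theorem eq_fracPoint_of_support {q : (Fin 4 → Fin 4 → ℝ) × (Fin 5 → Fin 5 → ℝ)}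
    (hq : q ∈ Qbar1 4) (hw0 : ∀ i r, fracW i r = 0 → q.1 i r = 0)
    (hy0 : ∀ a b, fracY a b = 0 → q.2 a b = 0) :
    q = (fracW, fracY) := by
  obtain ⟨hw, -, hfirst, hlast, hstep, hsum, -⟩ := hq
  have h₁ := hstep 0 1 0 1 (by decide) rfl
  have h₂ := hstep 2 0 0 1 (by decide) rfl
  rw [hy0 _ _ (by simp [fracY]), sub_zero] at h₁ h₂
  have hw_eq := eq_fracW_of_support hw hw0 h₁ h₂
  refine Prod.ext hw_eq ?_
  have hoff : ∀ i j : Fin 4, i ≠ j → ¬(i = 1 ∧ j = 2) → q.2 i.succ j.succ = 0 := by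
    intro i j
    fin_cases i <;> fin_cases j <;> simp <;> exact hy0 _ _ (by simp [fracY])
  have h23 : q.2 2 3 = 3 := by
    simp only [Fin.sum_univ_four] at hsum
    simp (disch := decide) only [hoff] at hsum
    norm_num [Fin.ext_iff] at hsum
    exact hsum
  have f0 : q.2 0 1 = 1 / 2 := by simpa [hw_eq, fracW] using hfirst 0 0 rfl
  have f2 : q.2 0 3 = 1 / 2 := by simpa [hw_eq, fracW] using hfirst 2 0 rfl
  have l2 : q.2 3 0 = 1 / 2 := by simpa [hw_eq, fracW] using hlast 2 3 rfl
  have l3 : q.2 4 0 = 1 / 2 := by simpa [hw_eq, fracW] using hlast 3 3 rfl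
  funext a b
  fin_cases a <;> fin_cases b <;> simp [fracY] <;>
    first | exact hy0 _ _ (by simp [fracY]) | linarith

theorem fracPoint_mem_extremePoints : (fracW, fracY) ∈ Set.extremePoints ℝ (Qbar1 4) := by
  refine mem_extremePoints_of_forall_le_smul fracPoint_mem_Qbar1
    (fun q hq => Prod.le_def.2 ⟨hq.1.2.2, hq.2.2.2.2.2.2⟩)
    fun q hq t hle => eq_fracPoint_of_support hq ?_ ?_
  · exact fun i r h => le_antisymm (by simpa [h] using hle.1 i r) (hq.1.2.2 i r)
  · exact fun a b h => le_antisymm (by simpa [h] using hle.2 a b) (hq.2.2.2.2.2.2 a b)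

/-- For `n = 5`, the polytope `Q̄₁` is non-integral: it has
an extreme point at least one of whose coordinates is not an integer. -/
theorem Qbar1_nonintegral_five :
    ∃ p ∈ Set.extremePoints ℝ (Qbar1 4),
      (∃ i r, ¬∃ z : ℤ, p.1 i r = (z : ℝ)) ∨ (∃ i j, ¬∃ z : ℤ, p.2 i j = (z : ℝ)) := by
  refine ⟨(fracW, fracY), fracPoint_mem_extremePoints, Or.inl ⟨0, 0, ?_⟩⟩
  rintro ⟨z, hz⟩
  have h2z : (2 * z : ℝ) = 1 := by rw [← hz]; simp [fracW]
  have : 2 * z = 1 := by exact_mod_cast h2z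
  omega
end

section
/- Let c ∈ ℝ^{m×m} be any cost matrix. A point (w*, y*) ∈ Q̄₁ minimizes the linear objective Σ_{i,r} c_{ir} w_{ir} over Q̄₁ if and only if w* minimizes Σ_{i,r} c_{ir} w_{ir} over the assignment polytope 𝒜ₙ. -/
/-!
Every `w ∈ 𝒜ₙ` lifts to a point `(w, y) ∈ Q̄₁`, so the projection of `Q̄₁` to the `w`-coordinates
is exactly `𝒜ₙ`, and the two problems minimise the same objective over the same set of `w`.
For the lift put `y_{ij} = Σ_r w_{ir} w_{j,r+1}` on the arcs between cities: as `w ≤ 1`,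
`w_{ir} + w_{j,r+1} - 1 ≤ w_{ir} w_{j,r+1} ≤ y_{ij}`, and double stochasticity makes these masses
sum to `m - 1` over all pairs `(i, j)`. The diagonal part of that mass is moved onto one arc
between two distinct cities.
-/

open Finset

section
variable {k : ℕ} {w : Fin (k + 1) → Fin (k + 1) → ℝ}

def transitionMass (w : Fin (k + 1) → Fin (k + 1) → ℝ) (i j : Fin (k + 1)) : ℝ :=
  ∑ s : Fin k, w i s.castSucc * w j s.succ

lemma transitionMass_nonneg (hw : ∀ i r, 0 ≤ w i r) (i j : Fin (k + 1)) :
    0 ≤ transitionMass w i j :=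
  sum_nonneg fun _ _ => mul_nonneg (hw i _) (hw j _)

lemma mul_le_transitionMass (hw : ∀ i r, 0 ≤ w i r) (i j : Fin (k + 1)) {r r' : Fin (k + 1)}
    (hr : r'.val = r.val + 1) : w i r * w j r' ≤ transitionMass w i j := by
  obtain ⟨s, rfl, rfl⟩ : ∃ s : Fin k, s.castSucc = r ∧ s.succ = r' :=
    ⟨⟨r, by omega⟩, Fin.ext rfl, Fin.ext hr.symm⟩
  exact single_le_sum (fun t _ => mul_nonneg (hw i t.castSucc) (hw j t.succ)) (mem_univ s)

lemma sum_transitionMass (hw : w ∈ assignmentPolytope (k + 1)) :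
    ∑ i, ∑ j, transitionMass w i j = k := by
  calc ∑ i, ∑ j, transitionMass w i j
      = ∑ i, ∑ s : Fin k, ∑ j, w i s.castSucc * w j s.succ := sum_congr rfl fun i _ => sum_comm
    _ = ∑ s : Fin k, (∑ i, w i s.castSucc) * ∑ j, w j s.succ := by
        rw [sum_comm]; simp_rw [sum_mul_sum]
    _ = k := by simp [hw.2.1]

def liftToQbar1 (w : Fin (k + 1) → Fin (k + 1) → ℝ) : Fin (k + 1 + 1) → Fin (k + 1 + 1) → ℝ :=
  Fin.cons (Fin.cons 0 fun j => w j 0) fun i => Fin.cons (w i (Fin.last k)) fun j =>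
    if i = j then 0
    else transitionMass w i j + if i = 0 ∧ j = Fin.last k then ∑ l, transitionMass w l l else 0

@[simp] lemma liftToQbar1_zero_zero : liftToQbar1 w 0 0 = 0 := rfl
@[simp] lemma liftToQbar1_zero_succ (j : Fin (k + 1)) : liftToQbar1 w 0 j.succ = w j 0 := rfl
@[simp] lemma liftToQbar1_succ_zero (i : Fin (k + 1)) :
    liftToQbar1 w i.succ 0 = w i (Fin.last k) := rfl
@[simp] lemma liftToQbar1_succ_succ (i j : Fin (k + 1)) :
    liftToQbar1 w i.succ j.succ = if i = j then 0 else transitionMass w i j +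
      if i = 0 ∧ j = Fin.last k then ∑ l, transitionMass w l l else 0 := rfl

lemma sum_offDiag_liftToQbar1 (hk : k ≠ 0) (hw : w ∈ assignmentPolytope (k + 1)) :
    (∑ i : Fin (k + 1), ∑ j : Fin (k + 1),
      if i = j then 0 else liftToQbar1 w i.succ j.succ) = k := by
  have h0 : (0 : Fin (k + 1)) ≠ Fin.last k := by simp [Fin.ext_iff]; omega
  have hentry : ∀ i j, (if i = j then 0 else liftToQbar1 w i.succ j.succ) =
      transitionMass w i j - (if i = j then transitionMass w i j else 0) +
        if i = 0 ∧ j = Fin.last k then ∑ l, transitionMass w l l else 0 := by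
    intro i j
    by_cases hij : i = j
    · subst hij
      have hnot : ¬(i = 0 ∧ i = Fin.last k) := fun h => h0 (h.1 ▸ h.2)
      rw [if_pos rfl, if_pos rfl, if_neg hnot, sub_self, add_zero]
    · simp [hij]
  simp only [hentry, sum_add_distrib, sum_sub_distrib, sum_ite_eq, mem_univ, if_true, ite_and,
    sum_ite_irrel, sum_const_zero, sum_ite_eq', sum_transitionMass hw]
  ring

lemma liftToQbar1_nonneg (hw : ∀ i r, 0 ≤ w i r) (a b : Fin (k + 1 + 1)) :
    0 ≤ liftToQbar1 w a b := by
  have hS := transitionMass_nonneg hw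
  induction a using Fin.cases <;> induction b using Fin.cases
  all_goals simp only [liftToQbar1_zero_zero, liftToQbar1_zero_succ, liftToQbar1_succ_zero,
    liftToQbar1_succ_succ, le_refl, hw]
  split_ifs
  · exact le_rfl
  · exact add_nonneg (hS _ _) (sum_nonneg fun l _ => hS l l)
  · exact (add_zero (transitionMass w _ _)).symm ▸ hS _ _

lemma mk_liftToQbar1_mem_Qbar1 (hk : k ≠ 0) (hw : w ∈ assignmentPolytope (k + 1)) :
    (w, liftToQbar1 w) ∈ Qbar1 (k + 1) := by
  have hle := le_one_of_mem_assignmentPolytope hw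
  refine ⟨hw, fun a => ?_, fun i r hr => ?_, fun i r hr => ?_, fun i j r r' hij hr => ?_,
    by simpa using sum_offDiag_liftToQbar1 hk hw, liftToQbar1_nonneg hw.2.2⟩
  · induction a using Fin.cases <;> simp
  · obtain rfl : r = 0 := Fin.ext hr
    rfl
  · obtain rfl : r = Fin.last k := Fin.ext (by simpa using hr)
    rfl
  · have hslack : 0 ≤ if i = 0 ∧ j = Fin.last k then ∑ l, transitionMass w l l else 0 := by
      split_ifs
      exacts [sum_nonneg fun l _ => transitionMass_nonneg hw.2.2 l l, le_rfl]
    have hprod := mul_le_transitionMass hw.2.2 i j hr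
    simp only [liftToQbar1_succ_succ, if_neg hij]
    nlinarith [mul_nonneg (sub_nonneg.2 (hle i r)) (sub_nonneg.2 (hle j r'))]

end

lemma image_fst_Qbar1 {m : ℕ} (hm : 2 ≤ m) : Prod.fst '' Qbar1 m = assignmentPolytope m := by
  refine (Set.image_subset_iff.2 fun p hp => hp.1).antisymm fun w hw => ?_
  obtain ⟨k, rfl⟩ : ∃ k, m = k + 1 := ⟨m - 1, by omega⟩
  exact ⟨(w, liftToQbar1 w), mk_liftToQbar1_mem_Qbar1 (by omega) hw, rfl⟩

theorem optimal_Qbar1_iff_optimal_LAP_general (n : ℕ) (hn : 3 ≤ n)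
    (c : Fin (n - 1) → Fin (n - 1) → ℝ)
    (wstar : Fin (n - 1) → Fin (n - 1) → ℝ) :
    (∀ p ∈ Qbar1 (n - 1),
        ∑ i, ∑ r, c i r * wstar i r ≤ ∑ i, ∑ r, c i r * p.1 i r) ↔
      (∀ w ∈ assignmentPolytope (n - 1),
        ∑ i, ∑ r, c i r * wstar i r ≤ ∑ i, ∑ r, c i r * w i r) := by
  rw [← image_fst_Qbar1 (by omega : 2 ≤ n - 1), Set.forall_mem_image]

/-- For any cost matrix `c`, a point `(w*, y*) ∈ Q̄₁`
minimizes the linear objective `Σ_{i,r} c_{ir} w_{ir}` over `Q̄₁` if and only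
if `w*` minimizes `Σ_{i,r} c_{ir} w_{ir}` over the assignment polytope `𝒜ₙ`. -/
theorem optimal_Qbar1_iff_optimal_LAP (n : ℕ) (hn : 3 ≤ n)
    (c : Fin (n - 1) → Fin (n - 1) → ℝ)
    (wstar : Fin (n - 1) → Fin (n - 1) → ℝ)
    (ystar : Fin (n - 1 + 1) → Fin (n - 1 + 1) → ℝ)
    (h : (wstar, ystar) ∈ Qbar1 (n - 1)) :
    (∀ p ∈ Qbar1 (n - 1),
        ∑ i, ∑ r, c i r * wstar i r ≤ ∑ i, ∑ r, c i r * p.1 i r) ↔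
      (∀ w ∈ assignmentPolytope (n - 1),
        ∑ i, ∑ r, c i r * wstar i r ≤ ∑ i, ∑ r, c i r * w i r) :=
  optimal_Qbar1_iff_optimal_LAP_general n hn c wstar
end

section
/- Let Q₀ ⊆ ℝ^{m×m} × ℝ^κ be a nonempty compact convex set whose projection onto the w-variables equals the assignment polytope 𝒜ₙ, and suppose the projection map (ŵ, x̂) ↦ ŵ restricts to a bijection from the extreme points of Q₀ onto the extreme points of 𝒜ₙ. Let c̃ ∈ ℝ^κ be such that for every extreme point (ŵ, x̂) of Q₀, if ŵ is the permutation matrix of a permutation u of {1,…,m} (ŵ_{ir} = 1 iff i = u(r)), then c̃ᵀx̂ = TourCost(u). Then the minimum of c̃ᵀx over (w,x) ∈ Q₀ equals the minimum of TourCost(u) over all permutations u of {1,…,m}; moreover, for every extreme point (ŵ, x̂) of Q₀ attaining this minimum, the permutation u whose permutation matrix is ŵ is a minimum-cost TSP tour. (Thus the linear program over Q₀ correctly solves the TSP optimization problem, irrespective of whether Q₀ projects to the TSP polytope 𝒫ₙ or not.) -/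
open Set

section KreinMilman

variable {E : Type*} [AddCommGroup E] [Module ℝ E] [TopologicalSpace E] [T2Space E]
  [IsTopologicalAddGroup E] [ContinuousSMul ℝ E] [LocallyConvexSpace ℝ E] {s : Set E}

theorem IsCompact.exists_mem_extremePoints_isMinOn (hs : IsCompact s) (hne : s.Nonempty)
    (l : StrongDual ℝ E) : ∃ x ∈ s.extremePoints ℝ, IsMinOn l s x := by
  have hexp : IsExposed ℝ s ((-l).toExposed s) := ContinuousLinearMap.toExposed.isExposed
  obtain ⟨z, hzs, hz⟩ := hs.exists_isMinOn hne l.continuous.continuousOn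
  obtain ⟨x, hx⟩ := (hexp.isCompact hs).extremePoints_nonempty
    ⟨z, hzs, fun y hy => by simpa using hz hy⟩
  exact ⟨x, hexp.isExtreme.extremePoints_subset_extremePoints hx,
    fun y hy => by simpa using hx.1.2 y hy⟩

end KreinMilman

theorem assignmentPolytope_eq_doublyStochastic (m : ℕ) :
    assignmentPolytope m = (doublyStochastic ℝ (Fin m) : Set (Matrix (Fin m) (Fin m) ℝ)) := by
  ext w
  refine Iff.trans ?_ mem_doublyStochastic_iff_sum.symm
  exact ⟨fun ⟨hrow, hcol, hnonneg⟩ => ⟨hnonneg, hrow, hcol⟩,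
    fun ⟨hnonneg, hrow, hcol⟩ => ⟨hrow, hcol, hnonneg⟩⟩

theorem permMatrix_eq_permMatrix_inv (m : ℕ) (u : Equiv.Perm (Fin m)) :
    permMatrix m u = (u⁻¹).permMatrix ℝ := by
  ext i r
  simp [permMatrix, Equiv.Perm.permMatrix, PEquiv.toMatrix_apply, Equiv.eq_symm_apply, eq_comm]

theorem extremePoints_assignmentPolytope (m : ℕ) :
    extremePoints ℝ (assignmentPolytope m) = range (permMatrix m) := by
  refine (congrArg (extremePoints ℝ) (assignmentPolytope_eq_doublyStochastic m)).trans
    (extremePoints_doublyStochastic.trans ?_)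
  ext w
  constructor
  · rintro ⟨σ, rfl⟩
    exact ⟨σ⁻¹, by rw [permMatrix_eq_permMatrix_inv, inv_inv]⟩
  · rintro ⟨u, rfl⟩
    exact ⟨u⁻¹, (permMatrix_eq_permMatrix_inv m u).symm⟩

theorem LP0_solves_TSP_general (n κ : ℕ)
    (d : Fin (n - 1 + 1) → Fin (n - 1 + 1) → ℝ)
    (Q₀ : Set ((Fin (n - 1) → Fin (n - 1) → ℝ) × (Fin κ → ℝ)))
    (hne : Q₀.Nonempty) (hcomp : IsCompact Q₀)
    (hbij : Set.BijOn (fun p => p.1) (Set.extremePoints ℝ Q₀)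
      (Set.extremePoints ℝ (assignmentPolytope (n - 1))))
    (ctilde : Fin κ → ℝ)
    (hcost : ∀ p ∈ Set.extremePoints ℝ Q₀, ∀ u : Equiv.Perm (Fin (n - 1)),
      p.1 = permMatrix (n - 1) u → ∑ k, ctilde k * p.2 k = tourCost (n - 1) d u) :
    sInf {v : ℝ | ∃ p ∈ Q₀, v = ∑ k, ctilde k * p.2 k} =
        sInf {v : ℝ | ∃ u : Equiv.Perm (Fin (n - 1)), v = tourCost (n - 1) d u} ∧
      ∀ p ∈ Set.extremePoints ℝ Q₀,
        (∀ q ∈ Q₀, ∑ k, ctilde k * p.2 k ≤ ∑ k, ctilde k * q.2 k) →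
        ∀ u : Equiv.Perm (Fin (n - 1)), p.1 = permMatrix (n - 1) u →
          ∀ u' : Equiv.Perm (Fin (n - 1)), tourCost (n - 1) d u ≤ tourCost (n - 1) d u' := by
  let L : StrongDual ℝ ((Fin (n - 1) → Fin (n - 1) → ℝ) × (Fin κ → ℝ)) :=
    (∑ k, ctilde k • ContinuousLinearMap.proj k).comp (ContinuousLinearMap.snd ℝ _ _)
  have hL : ∀ p, L p = ∑ k, ctilde k * p.2 k := fun p => by simp [L]
  have hrealized : ∀ u, ∃ p ∈ Q₀, ∑ k, ctilde k * p.2 k = tourCost (n - 1) d u := fun u => by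
    obtain ⟨p, hp, hpu⟩ :=
      hbij.surjOn (by rw [extremePoints_assignmentPolytope]; exact Set.mem_range_self u)
    exact ⟨p, extremePoints_subset hp, hcost p hp u hpu⟩
  obtain ⟨p₀, hp₀, hmin⟩ := hcomp.exists_mem_extremePoints_isMinOn hne L
  obtain ⟨u₀, hu₀⟩ : p₀.1 ∈ Set.range (permMatrix (n - 1)) :=
    extremePoints_assignmentPolytope (n - 1) ▸ hbij.mapsTo hp₀
  have hp₀min : ∀ q ∈ Q₀, ∑ k, ctilde k * p₀.2 k ≤ ∑ k, ctilde k * q.2 k := fun q hq => by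
    rw [← hL, ← hL]; exact hmin hq
  refine ⟨?_, fun p hp hpmin u hpu u' => ?_⟩
  · have hLP : IsLeast {v : ℝ | ∃ p ∈ Q₀, v = ∑ k, ctilde k * p.2 k} (∑ k, ctilde k * p₀.2 k) :=
      ⟨⟨p₀, extremePoints_subset hp₀, rfl⟩, by rintro v ⟨q, hq, rfl⟩; exact hp₀min q hq⟩
    have hTSP : IsLeast {v : ℝ | ∃ u, v = tourCost (n - 1) d u} (∑ k, ctilde k * p₀.2 k) := by
      refine ⟨⟨u₀, hcost p₀ hp₀ u₀ hu₀.symm⟩, ?_⟩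
      rintro v ⟨u, rfl⟩
      obtain ⟨q, hq, hqu⟩ := hrealized u
      exact hqu ▸ hp₀min q hq
    rw [hLP.csInf_eq, hTSP.csInf_eq]
  · obtain ⟨q, hq, hqu'⟩ := hrealized u'
    exact hcost p hp u hpu ▸ hqu' ▸ hpmin q hq

/-- Theorem `LP_Equivalences-0`. Let `Q₀` be a nonempty
compact convex set in the `(w, x)`-variables whose projection onto the
`w`-variables equals the assignment polytope `𝒜ₙ`, and suppose the
projection `(ŵ, x̂) ↦ ŵ` restricts to a bijection from the extreme points of
`Q₀` onto the extreme points of `𝒜ₙ`.  Suppose the cost vector `c̃` attaches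
to every extreme point `(ŵ, x̂)` of `Q₀` whose `w`-component is the
permutation matrix of `u` the cost `TourCost(u)` of the associated TSP tour.
Then the minimum of `c̃ᵀx` over `Q₀` equals the minimum tour cost over all
permutations, and every extreme-point minimizer of the LP yields a
minimum-cost TSP tour — irrespective of whether `Q₀` projects to "the TSP
polytope" `𝒫ₙ` or not. -/
theorem LP0_solves_TSP (n κ : ℕ) (hn : 3 ≤ n)
    (d : Fin (n - 1 + 1) → Fin (n - 1 + 1) → ℝ)
    (Q₀ : Set ((Fin (n - 1) → Fin (n - 1) → ℝ) × (Fin κ → ℝ)))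
    (hne : Q₀.Nonempty) (hcomp : IsCompact Q₀) (hconv : Convex ℝ Q₀)
    (hproj : {w | ∃ x : Fin κ → ℝ, (w, x) ∈ Q₀} = assignmentPolytope (n - 1))
    (hbij : Set.BijOn (fun p => p.1) (Set.extremePoints ℝ Q₀)
      (Set.extremePoints ℝ (assignmentPolytope (n - 1))))
    (ctilde : Fin κ → ℝ)
    (hcost : ∀ p ∈ Set.extremePoints ℝ Q₀, ∀ u : Equiv.Perm (Fin (n - 1)),
      p.1 = permMatrix (n - 1) u → ∑ k, ctilde k * p.2 k = tourCost (n - 1) d u) :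
    sInf {v : ℝ | ∃ p ∈ Q₀, v = ∑ k, ctilde k * p.2 k} =
        sInf {v : ℝ | ∃ u : Equiv.Perm (Fin (n - 1)), v = tourCost (n - 1) d u} ∧
      ∀ p ∈ Set.extremePoints ℝ Q₀,
        (∀ q ∈ Q₀, ∑ k, ctilde k * p.2 k ≤ ∑ k, ctilde k * q.2 k) →
        ∀ u : Equiv.Perm (Fin (n - 1)), p.1 = permMatrix (n - 1) u →
          ∀ u' : Equiv.Perm (Fin (n - 1)), tourCost (n - 1) d u ≤ tourCost (n - 1) d u' :=
  LP0_solves_TSP_general n κ d Q₀ hne hcomp hbij ctilde hcost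
end

section
/- Fix m ≥ 4 and travel costs d : C × C → ℝ on the cities C = {0,1,…,m}. Define the cost vector c̃ on triples of nodes by: c̃_{(i,1)(j,2)(k,3)} = d(0,i) + d(i,j) + d(j,k); c̃_{(i,1)(j,m−1)(k,m)} = d(j,k) + d(k,0); c̃_{(i,1)(j,r)(k,r+1)} = d(j,k) for 3 ≤ r ≤ m−2; and c̃ = 0 on all other triples. Let u be a permutation of {1,…,m} with permutation matrix ŵ (ŵ_{ir} = 1 iff i = u(r)), and let x̂ be a nonnegative vector indexed by triples of nodes satisfying: (i) x̂_{(i,p)(j,r)(k,s)} > 0 implies p < r < s and i, j, k pairwise distinct; (ii) x̂_{(i,p)(j,r)(k,s)} ≤ min(ŵ_{ip}, ŵ_{jr}, ŵ_{ks}); and (iii) ŵ_{ip} + ŵ_{jr} + ŵ_{ks} − x̂_{(i,p)(j,r)(k,s)} ≤ 2 for all triples with p < r < s and i, j, k pairwise distinct. Then Σ over all triples of c̃_{(i,p)(j,r)(k,s)} · x̂_{(i,p)(j,r)(k,s)} = d(0,u(1)) + Σ_{q=1}^{m−1} d(u(q),u(q+1)) + d(u(m),0), i.e., the linear function c̃ᵀx̂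 equals the total cost of the TSP tour 0 → u(1) → … → u(m) → 0 associated with ŵ. -/
/-- The cost vector `c̃` of Theorem `Applied_Costs_Thm`, on triples of nodes
`(i,p)(j,r)(k,s)` of the TSP assignment graph (a node `(l, s) : Fin m × Fin m`
stands for level/city `l+1` at stage `s+1`, so stage value `1` corresponds to
`s.val = 0`, stage `m−1` to `s.val = m−2`, and stage `m` to `s.val = m−1`):
`c̃_{(i,1)(j,2)(k,3)} = d(0,i) + d(i,j) + d(j,k)`;
`c̃_{(i,1)(j,m−1)(k,m)} = d(j,k) + d(k,0)`;
`c̃_{(i,1)(j,r)(k,r+1)} = d(j,k)` for `3 ≤ r ≤ m−2`; and `c̃ = 0` otherwise. -/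
def ctildeCost (m : ℕ) (d : Fin (m + 1) → Fin (m + 1) → ℝ)
    (a b c : Fin m × Fin m) : ℝ :=
  if a.2.val = 0 ∧ b.2.val = 1 ∧ c.2.val = 2 then
    d 0 a.1.succ + d a.1.succ b.1.succ + d b.1.succ c.1.succ
  else if a.2.val = 0 ∧ b.2.val = m - 2 ∧ c.2.val = m - 1 then
    d b.1.succ c.1.succ + d c.1.succ 0
  else if a.2.val = 0 ∧ 2 ≤ b.2.val ∧ b.2.val ≤ m - 3 ∧ c.2.val = b.2.val + 1 then
    d b.1.succ c.1.succ
  else 0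

open Finset

section

variable {m : ℕ}

theorem Fin.sum_ite_val_eq {M : Type*} [AddCommMonoid M] (k : ℕ) (hk : k < m) (f : Fin m → M) :
    (∑ r : Fin m, if r.val = k then f r else 0) = f ⟨k, hk⟩ := by
  simp_rw [← Fin.eq_mk_iff_val_eq (hk := hk)]
  convert Fintype.sum_ite_eq' _ f

theorem Fin.sum_sum_ite_val_eq_and {M : Type*} [AddCommMonoid M] (k l : ℕ) (hk : k < m)
    (hl : l < m) (f : Fin m → Fin m → M) :
    (∑ r : Fin m, ∑ s : Fin m, if r.val = k ∧ s.val = l then f r s else 0) = f ⟨k, hk⟩ ⟨l, hl⟩ := by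
  simp only [ite_and, sum_ite_irrel, sum_const_zero, Fin.sum_ite_val_eq l hl,
    Fin.sum_ite_val_eq k hk]

theorem Fin.sum_sum_ite_ne_zero_and_succ {M : Type*} [AddCommGroup M] (h : 1 < m)
    (f : Fin m → Fin m → M) :
    (∑ r : Fin m, ∑ s : Fin m, if r.val ≠ 0 ∧ s.val = r.val + 1 then f r s else 0) =
      (∑ r : Fin m, ∑ s : Fin m, if s.val = r.val + 1 then f r s else 0) -
        f ⟨0, by omega⟩ ⟨1, h⟩ := by
  rw [eq_sub_iff_add_eq, ← Fin.sum_sum_ite_val_eq_and 0 1 (by omega) h f, ← sum_add_distrib]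
  refine sum_congr rfl fun r _ => ?_
  rw [← sum_add_distrib]
  refine sum_congr rfl fun s _ => ?_
  split_ifs <;> first | omega | simp

theorem sum_permMatrix_mul (u : Equiv.Perm (Fin m)) (f : Fin m × Fin m → ℝ) :
    ∑ a, permMatrix m u a.1 a.2 * f a = ∑ p, f (u p, p) := by
  rw [Fintype.sum_prod_type_right]
  simp [permMatrix, ite_mul]

theorem sum_permMatrix_mul₃ (u : Equiv.Perm (Fin m))
    (f : Fin m × Fin m → Fin m × Fin m → Fin m × Fin m → ℝ) :
    ∑ a, ∑ b, ∑ c, f a b c *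
        (permMatrix m u a.1 a.2 * permMatrix m u b.1 b.2 * permMatrix m u c.1 c.2) =
      ∑ p, ∑ r, ∑ s, f (u p, p) (u r, r) (u s, s) := by
  calc _ = ∑ a, permMatrix m u a.1 a.2 * ∑ b, permMatrix m u b.1 b.2 *
          ∑ c, permMatrix m u c.1 c.2 * f a b c := by
        simp_rw [mul_sum]
        exact sum_congr rfl fun a _ => sum_congr rfl fun b _ => sum_congr rfl fun c _ => by ring
    _ = _ := by simp_rw [sum_permMatrix_mul]

theorem eq_permMatrix_mul_of_le_min {u : Equiv.Perm (Fin m)} {a b c : Fin m × Fin m} {t : ℝ}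
    (hab : a.2 < b.2) (hbc : b.2 < c.2) (ht : 0 ≤ t)
    (hle : t ≤ min (min (permMatrix m u a.1 a.2) (permMatrix m u b.1 b.2))
      (permMatrix m u c.1 c.2))
    (hge : a.1 ≠ b.1 → a.1 ≠ c.1 → b.1 ≠ c.1 →
      permMatrix m u a.1 a.2 + permMatrix m u b.1 b.2 + permMatrix m u c.1 c.2 - t ≤ 2) :
    t = permMatrix m u a.1 a.2 * permMatrix m u b.1 b.2 * permMatrix m u c.1 c.2 := by
  have hmin : min (min (permMatrix m u a.1 a.2) (permMatrix m u b.1 b.2))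
      (permMatrix m u c.1 c.2) =
      permMatrix m u a.1 a.2 * permMatrix m u b.1 b.2 * permMatrix m u c.1 c.2 := by
    simp only [permMatrix]
    split_ifs <;> norm_num
  refine le_antisymm (hmin ▸ hle) ?_
  by_cases hon : a.1 = u a.2 ∧ b.1 = u b.2 ∧ c.1 = u c.2
  · obtain ⟨ha, hb, hc⟩ := hon
    have hne {p q : Fin m} (hpq : p < q) : u p ≠ u q := u.injective.ne hpq.ne
    have h3 := hge (ha ▸ hb ▸ hne hab) (ha ▸ hc ▸ hne (hab.trans hbc)) (hb ▸ hc ▸ hne hbc)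
    simp only [permMatrix, if_pos ha, if_pos hb, if_pos hc] at h3 ⊢
    linarith
  · simp only [permMatrix]
    split_ifs with ha hb hc <;> first | linarith | exact absurd ⟨ha, hb, hc⟩ hon

theorem ctildeCost_eq_zero_of_not_lt (hm : 3 ≤ m) (d : Fin (m + 1) → Fin (m + 1) → ℝ)
    {a b c : Fin m × Fin m} (h : ¬(a.2 < b.2 ∧ b.2 < c.2)) : ctildeCost m d a b c = 0 := by
  simp only [Fin.lt_def] at h
  unfold ctildeCost
  split_ifs <;> first | rfl | omega

theorem ctildeCost_eq_zero_of_stage_ne_zero (d : Fin (m + 1) → Fin (m + 1) → ℝ)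
    {a b c : Fin m × Fin m} (h : a.2.val ≠ 0) : ctildeCost m d a b c = 0 := by
  simp [ctildeCost, h]

theorem ctildeCost_eq_of_stage_eq_zero (hm : 4 ≤ m) (d : Fin (m + 1) → Fin (m + 1) → ℝ)
    {a b c : Fin m × Fin m} (h : a.2.val = 0) :
    ctildeCost m d a b c =
      (if b.2.val = 1 ∧ c.2.val = 2 then d 0 a.1.succ + d a.1.succ b.1.succ else 0) +
      (if b.2.val = m - 2 ∧ c.2.val = m - 1 then d c.1.succ 0 else 0) +
      (if b.2.val ≠ 0 ∧ c.2.val = b.2.val + 1 then d b.1.succ c.1.succ else 0) := by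
  have := c.2.isLt
  unfold ctildeCost
  split_ifs <;> first | omega | ring

theorem sum_ctildeCost_tour (hm : 4 ≤ m) (d : Fin (m + 1) → Fin (m + 1) → ℝ)
    (u : Equiv.Perm (Fin m)) :
    ∑ p, ∑ r, ∑ s, ctildeCost m d (u p, p) (u r, r) (u s, s) = tourCost m d u := by
  rw [Fintype.sum_eq_single (⟨0, by omega⟩ : Fin m) fun p hp =>
    sum_eq_zero fun r _ => sum_eq_zero fun s _ =>
      ctildeCost_eq_zero_of_stage_ne_zero d fun h => hp (Fin.ext h)]
  simp (disch := rfl) only [ctildeCost_eq_of_stage_eq_zero hm d, sum_add_distrib]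
  rw [Fin.sum_sum_ite_val_eq_and 1 2 (by omega) (by omega),
    Fin.sum_sum_ite_val_eq_and (m - 2) (m - 1) (by omega) (by omega),
    Fin.sum_sum_ite_ne_zero_and_succ (by omega), tourCost,
    Fin.sum_ite_val_eq 0 (by omega), Fin.sum_ite_val_eq (m - 1) (by omega)]
  ring

end

theorem ctilde_accounts_tour_cost_general (m : ℕ) (hm : 4 ≤ m)
    (d : Fin (m + 1) → Fin (m + 1) → ℝ) (u : Equiv.Perm (Fin m))
    (xhat : (Fin m × Fin m) → (Fin m × Fin m) → (Fin m × Fin m) → ℝ)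
    (hnonneg : ∀ a b c, 0 ≤ xhat a b c)
    (hii : ∀ a b c : Fin m × Fin m,
      xhat a b c ≤ min (min (permMatrix m u a.1 a.2) (permMatrix m u b.1 b.2))
        (permMatrix m u c.1 c.2))
    (hiii : ∀ a b c : Fin m × Fin m,
      a.2 < b.2 → b.2 < c.2 → a.1 ≠ b.1 → a.1 ≠ c.1 → b.1 ≠ c.1 →
      permMatrix m u a.1 a.2 + permMatrix m u b.1 b.2 + permMatrix m u c.1 c.2
        - xhat a b c ≤ 2) :
    ∑ a : Fin m × Fin m, ∑ b : Fin m × Fin m, ∑ c : Fin m × Fin m,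
        ctildeCost m d a b c * xhat a b c = tourCost m d u := by
  calc _ = ∑ a, ∑ b, ∑ c, ctildeCost m d a b c *
        (permMatrix m u a.1 a.2 * permMatrix m u b.1 b.2 * permMatrix m u c.1 c.2) := by
        refine sum_congr rfl fun a _ => sum_congr rfl fun b _ => sum_congr rfl fun c _ => ?_
        by_cases hlt : a.2 < b.2 ∧ b.2 < c.2
        · rw [← eq_permMatrix_mul_of_le_min hlt.1 hlt.2 (hnonneg a b c) (hii a b c)
            (hiii a b c hlt.1 hlt.2)]
        · simp only [ctildeCost_eq_zero_of_not_lt (by omega) d hlt, zero_mul]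
    _ = ∑ p, ∑ r, ∑ s, ctildeCost m d (u p, p) (u r, r) (u s, s) := sum_permMatrix_mul₃ u _
    _ = tourCost m d u := sum_ctildeCost_tour hm d u

/-- Theorem `Applied_Costs_Thm`. For `m ≥ 4`, a permutation
`u` of `{1,…,m}` with permutation matrix `ŵ`, and any nonnegative vector `x̂`
on triples of nodes satisfying conditions (i)–(iii), the linear function
`c̃ᵀx̂` equals the total cost
`d(0,u(1)) + Σ_{q=1}^{m−1} d(u(q),u(q+1)) + d(u(m),0)` of the TSP tour
`0 → u(1) → … → u(m) → 0` associated with `ŵ`. -/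
theorem ctilde_accounts_tour_cost (m : ℕ) (hm : 4 ≤ m)
    (d : Fin (m + 1) → Fin (m + 1) → ℝ) (u : Equiv.Perm (Fin m))
    (xhat : (Fin m × Fin m) → (Fin m × Fin m) → (Fin m × Fin m) → ℝ)
    (hnonneg : ∀ a b c, 0 ≤ xhat a b c)
    (hi : ∀ a b c : Fin m × Fin m, 0 < xhat a b c →
      a.2 < b.2 ∧ b.2 < c.2 ∧ a.1 ≠ b.1 ∧ a.1 ≠ c.1 ∧ b.1 ≠ c.1)
    (hii : ∀ a b c : Fin m × Fin m,
      xhat a b c ≤ min (min (permMatrix m u a.1 a.2) (permMatrix m u b.1 b.2))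
        (permMatrix m u c.1 c.2))
    (hiii : ∀ a b c : Fin m × Fin m,
      a.2 < b.2 → b.2 < c.2 → a.1 ≠ b.1 → a.1 ≠ c.1 → b.1 ≠ c.1 →
      permMatrix m u a.1 a.2 + permMatrix m u b.1 b.2 + permMatrix m u c.1 c.2
        - xhat a b c ≤ 2) :
    ∑ a : Fin m × Fin m, ∑ b : Fin m × Fin m, ∑ c : Fin m × Fin m,
        ctildeCost m d a b c * xhat a b c = tourCost m d u :=
  ctilde_accounts_tour_cost_general m hm d u xhat hnonneg hii hiii
end
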